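/- Let k be a field of characteristic zero and d ≥ 1. In the quotient ring k[X_0, X_1, X_2, X_3]/(F_1, F_2, F_3, X_3 − 1), where F_1 = X_1, F_2 = X_2·X_3^{d−1} − X_0^d, F_3 = X_1·X_3^{d−1} − X_2^d, the image of X_0^δ is zero if and only if δ ≥ d^2. Equivalently, this quotient ring is isomorphic to k[X_0]/(X_0^{d^2}). -/

import Mathlib

/-!
Modulo the relations, `X₃ = 1`, `X₁ = 0` and `X₂ = X₀^d`, so the last relation becomes
`X₀^(d²) = 0`. Hence evaluating at `(X, 0, X^d, 1)` and at `X₀` give mutually inverse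
isomorphisms between the quotient and `k[X]/(X^(d²))`, where `X^δ` vanishes exactly for `δ ≥ d²`.
-/

open MvPolynomial

namespace Polynomial

theorem mk_span_X_pow_X_pow_eq_zero_iff {R : Type*} [CommRing R] [IsDomain R] {n m : ℕ} :
    Ideal.Quotient.mk (Ideal.span {(X : R[X]) ^ n}) (X ^ m) = 0 ↔ n ≤ m := by
  rw [Ideal.Quotient.eq_zero_iff_mem, Ideal.mem_span_singleton,
    pow_dvd_pow_iff X_ne_zero not_isUnit_X]

end Polynomial

noncomputable section

namespace QuadraticIdempotentExample

variable (k : Type*) [CommRing k] (d : ℕ)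

def relationIdeal : Ideal (MvPolynomial (Fin 4) k) :=
  Ideal.span {X 1, X 2 * X 3 ^ (d - 1) - X 0 ^ d, X 1 * X 3 ^ (d - 1) - X 2 ^ d, X 3 - 1}

abbrev truncatedIdeal : Ideal (Polynomial k) :=
  Ideal.span {Polynomial.X ^ (d ^ 2)}

local notation "mk" => Ideal.Quotient.mk (relationIdeal k d)

variable {k d}

theorem mk_X_one : mk (X 1) = 0 :=
  Ideal.Quotient.eq_zero_iff_mem.2 (Ideal.subset_span (by simp))

theorem mk_X_three : mk (X 3) = 1 := by
  rw [← map_one mk]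
  exact Ideal.Quotient.eq.2 (Ideal.subset_span (by simp))

theorem mk_X_two : mk (X 2) = mk (X 0) ^ d := by
  have h : mk (X 2 * X 3 ^ (d - 1)) = mk (X 0 ^ d) :=
    Ideal.Quotient.eq.2 (Ideal.subset_span (by simp))
  rwa [map_mul, map_pow, map_pow, mk_X_three, one_pow, mul_one] at h

theorem mk_X_zero_pow : mk (X 0) ^ (d ^ 2) = 0 := by
  have h : mk (X 1 * X 3 ^ (d - 1)) = mk (X 2 ^ d) :=
    Ideal.Quotient.eq.2 (Ideal.subset_span (by simp))
  rwa [map_mul, map_pow, map_pow, mk_X_one, zero_mul, mk_X_two, ← pow_mul, ← sq, eq_comm] at h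

variable (k d)

theorem relationIdeal_le_ker_aeval :
    relationIdeal k d ≤ RingHom.ker ((Ideal.Quotient.mkₐ k (truncatedIdeal k d)).comp
      (aeval ![Polynomial.X, 0, Polynomial.X ^ d, 1])) := by
  rw [relationIdeal, Ideal.span_le]
  rintro g (rfl | rfl | rfl | rfl) <;>
    simp [← pow_mul, ← sq]

theorem truncatedIdeal_le_ker_aeval :
    truncatedIdeal k d ≤ RingHom.ker ((Ideal.Quotient.mkₐ k (relationIdeal k d)).comp
      (Polynomial.aeval (X 0))) := by
  rw [Ideal.span_le, Set.singleton_subset_iff]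
  simp [mk_X_zero_pow]

def toTruncated :
    (MvPolynomial (Fin 4) k ⧸ relationIdeal k d) →ₐ[k] Polynomial k ⧸ truncatedIdeal k d :=
  Ideal.Quotient.liftₐ _ _ fun _ ha => relationIdeal_le_ker_aeval k d ha

def ofTruncated :
    (Polynomial k ⧸ truncatedIdeal k d) →ₐ[k] MvPolynomial (Fin 4) k ⧸ relationIdeal k d :=
  Ideal.Quotient.liftₐ _ _ fun _ ha => truncatedIdeal_le_ker_aeval k d ha

@[simp]
theorem toTruncated_mk (p : MvPolynomial (Fin 4) k) :
    toTruncated k d (mk p) =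
      Ideal.Quotient.mk _ (aeval ![Polynomial.X, 0, Polynomial.X ^ d, 1] p) :=
  rfl

@[simp]
theorem ofTruncated_mk (p : Polynomial k) :
    ofTruncated k d (Ideal.Quotient.mk _ p) = mk (Polynomial.aeval (X 0) p) :=
  rfl

def quotientEquiv :
    (MvPolynomial (Fin 4) k ⧸ relationIdeal k d) ≃ₐ[k] Polynomial k ⧸ truncatedIdeal k d :=
  AlgEquiv.ofAlgHom (toTruncated k d) (ofTruncated k d)
    (Ideal.Quotient.algHom_ext _ (Polynomial.algHom_ext (by simp)))
    (Ideal.Quotient.algHom_ext _ (MvPolynomial.algHom_ext fun i => by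
      fin_cases i <;> simp [mk_X_one, mk_X_two, mk_X_three]))

theorem quotientEquiv_mk_X_zero_pow (δ : ℕ) :
    quotientEquiv k d (mk (X 0 ^ δ)) = Ideal.Quotient.mk _ (Polynomial.X ^ δ) := by
  simp [quotientEquiv]

end QuadraticIdempotentExample

end

theorem stmt3_general (k : Type*) [Field k] (d : ℕ) :
    let I : Ideal (MvPolynomial (Fin 4) k) :=
      Ideal.span {X 1, X 2 * X 3 ^ (d - 1) - X 0 ^ d, X 1 * X 3 ^ (d - 1) - X 2 ^ d, X 3 - 1}
    (∀ δ : ℕ, Ideal.Quotient.mk I ((X 0 : MvPolynomial (Fin 4) k) ^ δ) = 0 ↔ d ^ 2 ≤ δ) ∧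
    Nonempty ((MvPolynomial (Fin 4) k ⧸ I) ≃+*
      (Polynomial k ⧸ Ideal.span {(Polynomial.X : Polynomial k) ^ (d ^ 2)})) := by
  let e := QuadraticIdempotentExample.quotientEquiv k d
  refine ⟨fun δ => ?_, ⟨e.toRingEquiv⟩⟩
  rw [← Polynomial.mk_span_X_pow_X_pow_eq_zero_iff (R := k),
    ← QuadraticIdempotentExample.quotientEquiv_mk_X_zero_pow, map_eq_zero_iff e e.injective]
  rfl

/-- In `k[X₀,X₁,X₂,X₃]/(X₁, X₂X₃^{d−1} − X₀^d, X₁X₃^{d−1} − X₂^d, X₃ − 1)` the image of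
`X₀^δ` is zero iff `δ ≥ d²`; the quotient ring is isomorphic to `k[X₀]/(X₀^{d²})`. -/
theorem stmt3 (k : Type*) [Field k] [CharZero k] (d : ℕ) (hd : 1 ≤ d) :
    let I : Ideal (MvPolynomial (Fin 4) k) :=
      Ideal.span {X 1, X 2 * X 3 ^ (d - 1) - X 0 ^ d, X 1 * X 3 ^ (d - 1) - X 2 ^ d, X 3 - 1}
    (∀ δ : ℕ, Ideal.Quotient.mk I ((X 0 : MvPolynomial (Fin 4) k) ^ δ) = 0 ↔ d ^ 2 ≤ δ) ∧
    Nonempty ((MvPolynomial (Fin 4) k ⧸ I) ≃+*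
      (Polynomial k ⧸ Ideal.span {(Polynomial.X : Polynomial k) ^ (d ^ 2)})) :=
  stmt3_general k d
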